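/- For all integers N ≥ 2 and M ≥ 1 and every list (a_1,…,a_{N−1}) of integers with 1 ≤ a_i ≤ M for all i, there exists a plane forest with exactly N leaves and height at most M whose separation array equals (a_1,…,a_{N−1}). (This is Theorem 1(2): every array of the given form is the representation of some hierarchical organization instance.) -/

import Mathlib

/-- A rooted plane tree: a node carrying a finite ordered list of child subtrees.
A node with no children is a leaf. -/
inductive PTree : Type where
  | node : List PTree → PTree

namespace PTree

mutual
/-- Number of leaves of a plane tree. -/
def leaves : PTree → ℕ
  | .node [] => 1
  | .node (c :: cs) => c.leaves + leavesList cs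

/-- Total number of leaves of a list of plane trees. -/
def leavesList : List PTree → ℕ
  | [] => 0
  | c :: cs => c.leaves + leavesList cs
end

mutual
/-- Height of a plane tree (a single leaf has height 1). -/
def height : PTree → ℕ
  | .node [] => 1
  | .node (c :: cs) => 1 + max c.height (heightList cs)

/-- Maximum height among a list of plane trees (0 for the empty list). -/
def heightList : List PTree → ℕ
  | [] => 0
  | c :: cs => max c.height (heightList cs)
end

mutual
/-- Separation levels between consecutive leaves inside a tree whose root is at level `l`:
between two consecutive leaves lying in distinct children we record `l+1`
(one more than the level of their lowest common ancestor, which is the root). -/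
def enc : PTree → ℕ → List ℕ
  | .node [], _ => []
  | .node (c :: cs), l => c.enc (l + 1) ++ encList cs (l + 1)

/-- Separation levels for a list of sibling subtrees all at level `l`, including
the separator `l` between consecutive subtrees. -/
def encList : List PTree → ℕ → List ℕ
  | [], _ => []
  | c :: cs, l => (l :: c.enc l) ++ encList cs l
end

end PTree

/-- Total number of leaves of a plane forest. -/
def forestLeaves (F : List PTree) : ℕ := PTree.leavesList F

/-- Height of a plane forest: the maximum level of any of its nodes (roots are at level 1). -/
def forestHeight (F : List PTree) : ℕ := PTree.heightList F

/-- The separation array of a plane forest: for each pair of consecutive leaves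
(numbered left to right), the level at which they separate (`1` if they lie in
different trees, and `1 +` the level of their lowest common ancestor otherwise). -/
def forestSep : List PTree → List ℕ
  | [] => []
  | t :: ts => t.enc 1 ++ PTree.encList ts 1

/-!
Read the array from right to left and prepend one leaf at a time. View the forest as the children
of a virtual root at level `0`; a new leftmost leaf that must separate from the current leftmost
leaf at level `k` becomes a new first child of the node at level `k - 1` on the leftmost branch
(`k = 1` starts a new tree). If that branch ends in a leaf above level `k - 1`, the leaf is first
pushed down along a unary chain. This raises the height of the forest to at most `k`.
-/

namespace PTree

def consLeaf : PTree → ℕ → PTree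
  | node [], 0 => node [node [], node []]
  | node [], d + 1 => node [consLeaf (node []) d]
  | node (c :: cs), 0 => node (node [] :: c :: cs)
  | node (c :: cs), d + 1 => node (consLeaf c d :: cs)

theorem enc_consLeaf (t : PTree) (d l : ℕ) :
    (consLeaf t d).enc l = (l + d + 1) :: t.enc l := by
  fun_induction consLeaf t d generalizing l with
  | case1 => simp [enc, encList]
  | case2 d ih =>
    simp only [enc, encList, ih, List.append_nil, List.cons.injEq, and_true]
    omega
  | case3 c cs => simp [enc, encList]
  | case4 c cs d ih =>
    simp only [enc, ih, List.cons_append, List.cons.injEq, and_true]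
    omega

theorem leaves_consLeaf (t : PTree) (d : ℕ) : (consLeaf t d).leaves = t.leaves + 1 := by
  fun_induction consLeaf t d with
  | case1 => simp [leaves, leavesList]
  | case2 d ih => simp [leaves, leavesList, ih]
  | case3 c cs =>
    simp only [leaves, leavesList]
    omega
  | case4 c cs d ih =>
    simp only [leaves, ih]
    omega

theorem height_consLeaf_le (t : PTree) (d : ℕ) :
    (consLeaf t d).height ≤ max t.height (d + 2) := by
  fun_induction consLeaf t d with
  | case1 => simp [height, heightList]
  | case2 d ih =>
    simp only [height, heightList, Nat.max_zero] at ih ⊢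
    omega
  | case3 c cs =>
    simp only [height, heightList]
    omega
  | case4 c cs d ih =>
    simp only [height] at ih ⊢
    omega

theorem consLeaf_ne_leaf (t : PTree) (d : ℕ) : consLeaf t d ≠ node [] := by
  fun_cases consLeaf t d <;> simp

theorem exists_enc_eq (l M : ℕ) (hM : 1 ≤ M) (a : List ℕ) (ha : ∀ x ∈ a, l < x ∧ x ≤ l + M) :
    ∃ t : PTree, t ≠ node [] ∧ t.leaves = a.length + 1 ∧ t.height ≤ M + 1 ∧ t.enc l = a := by
  induction a with
  | nil => exact ⟨node [node []], by simp, rfl, by simpa [height, heightList], rfl⟩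
  | cons k b ih =>
    obtain ⟨hlk, hkM⟩ := ha k List.mem_cons_self
    obtain ⟨t, -, hleaves, hheight, henc⟩ := ih fun x hx => ha x (List.mem_cons_of_mem k hx)
    refine ⟨consLeaf t (k - l - 1), consLeaf_ne_leaf _ _, ?_, ?_, ?_⟩
    · simp [leaves_consLeaf, hleaves]
    · have := height_consLeaf_le t (k - l - 1)
      omega
    · rw [enc_consLeaf, henc]
      congr 1
      omega

end PTree

theorem forestSep_eq_enc (F : List PTree) : forestSep F = (PTree.node F).enc 0 := by
  cases F <;> rfl

theorem forestLeaves_eq_leaves {F : List PTree} (hF : F ≠ []) :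
    forestLeaves F = (PTree.node F).leaves := by
  cases F
  · contradiction
  · rfl

theorem forestHeight_add_one {F : List PTree} (hF : F ≠ []) :
    forestHeight F + 1 = (PTree.node F).height := by
  cases F
  · contradiction
  · simp only [forestHeight, PTree.height, PTree.heightList]
    omega

/-- Theorem 1(2).
For all integers `N ≥ 2` and `M ≥ 1` and every list `(a_1,…,a_{N-1})` of integers with
`1 ≤ a_i ≤ M` for all `i`, there exists a plane forest with exactly `N` leaves and height
at most `M` whose separation array equals `(a_1,…,a_{N-1})`. -/
theorem exists_forest_of_sepArray (N M : ℕ) (hN : 2 ≤ N) (hM : 1 ≤ M)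
    (a : List ℕ) (hlen : a.length = N - 1) (ha : ∀ x ∈ a, 1 ≤ x ∧ x ≤ M) :
    ∃ F : List PTree, F ≠ [] ∧ forestLeaves F = N ∧ forestHeight F ≤ M ∧
      forestSep F = a := by
  obtain ⟨⟨F⟩, hnode, hleaves, hheight, henc⟩ :=
    PTree.exists_enc_eq 0 M hM a fun x hx => by have := ha x hx; omega
  have hF : F ≠ [] := by rintro rfl; exact hnode rfl
  refine ⟨F, hF, ?_, ?_, forestSep_eq_enc F ▸ henc⟩
  · rw [forestLeaves_eq_leaves hF, hleaves]
    omega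
  · have := forestHeight_add_one hF
    omega
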